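/- Fix Δ > 0 and ε ≥ 0. The function σ ↦ Φ(Δ/(2σ) − εσ/Δ) − e^ε·Φ(−Δ/(2σ) − εσ/Δ) is (weakly) monotone decreasing in σ on (0, ∞). -/

import Mathlib

/-! The derivative in `σ` is `φ(a) a' - e^ε φ(b) b'` with `a, b = ±Δ/(2σ) - εσ/Δ`. Since
`a² - b² = -2ε`, the Gaussian density satisfies `e^ε φ(b) = φ(a)`, so the derivative collapses to
`φ(a) (a' - b') = -φ(a) Δ/σ² ≤ 0`. -/

open MeasureTheory Real Set Filter

noncomputable def stdΦ (x : ℝ) : ℝ :=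
  (Real.sqrt (2 * Real.pi))⁻¹ * ∫ t in Set.Iic x, Real.exp (-t ^ 2 / 2)

noncomputable def stdφ (x : ℝ) : ℝ :=
  (√(2 * π))⁻¹ * exp (-x ^ 2 / 2)

lemma stdφ_nonneg (x : ℝ) : 0 ≤ stdφ x := by
  unfold stdφ; positivity

lemma stdφ_sub_eq_exp_mul_stdφ_neg_sub (u v : ℝ) :
    stdφ (u - v) = exp (2 * u * v) * stdφ (-u - v) := by
  unfold stdφ
  rw [mul_left_comm, ← exp_add]
  ring_nf

lemma integrable_exp_neg_sq_div_two : Integrable fun t : ℝ => exp (-t ^ 2 / 2) := by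
  simpa [neg_div, div_eq_inv_mul] using integrable_exp_neg_mul_sq (b := 1 / 2) (by norm_num)

lemma hasDerivAt_stdΦ (x : ℝ) : HasDerivAt stdΦ (stdφ x) x := by
  have hint := integrable_exp_neg_sq_div_two
  have hcont : Continuous fun t : ℝ => exp (-t ^ 2 / 2) := by fun_prop
  have hsplit : stdΦ = fun y => (√(2 * π))⁻¹ *
      ((∫ t in Iic 0, exp (-t ^ 2 / 2)) + ∫ t in (0 : ℝ)..y, exp (-t ^ 2 / 2)) := by
    funext y
    rw [stdΦ, ← intervalIntegral.integral_Iic_sub_Iic hint.integrableOn hint.integrableOn,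
      add_sub_cancel]
  rw [hsplit]
  exact ((intervalIntegral.integral_hasDerivAt_right hint.intervalIntegrable
    hcont.stronglyMeasurable.stronglyMeasurableAtFilter hcont.continuousAt).const_add _).const_mul _

noncomputable def gaussianDelta (Δ ε σ : ℝ) : ℝ :=
  stdΦ (Δ / (2 * σ) - ε * σ / Δ) - exp ε * stdΦ (-(Δ / (2 * σ)) - ε * σ / Δ)

lemma hasDerivAt_gaussianDelta {Δ σ : ℝ} (ε : ℝ) (hΔ : Δ ≠ 0) (hσ : σ ≠ 0) :
    HasDerivAt (gaussianDelta Δ ε) (-(Δ / σ ^ 2) * stdφ (Δ / (2 * σ) - ε * σ / Δ)) σ := by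
  have hu : HasDerivAt (fun σ => Δ / (2 * σ)) (-(Δ / (2 * σ ^ 2))) σ := by
    rw [show (fun s : ℝ => Δ / (2 * s)) = fun s => Δ / 2 * s⁻¹ by funext s; ring]
    exact ((hasDerivAt_inv hσ).const_mul (Δ / 2)).congr_deriv (by ring)
  have hv : HasDerivAt (fun σ => ε * σ / Δ) (ε / Δ) σ := by
    simpa using ((hasDerivAt_id σ).const_mul ε).div_const Δ
  have hexp : exp ε * stdφ (-(Δ / (2 * σ)) - ε * σ / Δ) = stdφ (Δ / (2 * σ) - ε * σ / Δ) := by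
    rw [stdφ_sub_eq_exp_mul_stdφ_neg_sub (Δ / (2 * σ)),
      show 2 * (Δ / (2 * σ)) * (ε * σ / Δ) = ε by field_simp]
  refine (((hasDerivAt_stdΦ _).comp σ (hu.sub hv)).sub
    (((hasDerivAt_stdΦ _).comp σ (hu.neg.sub hv)).const_mul (exp ε))).congr_deriv ?_
  simp only [Pi.sub_apply, Pi.neg_apply]
  linear_combination (ε / Δ - Δ / (2 * σ ^ 2)) * hexp

theorem stmt2_general (Δ ε : ℝ) (hΔ : 0 < Δ) :
    AntitoneOn (fun σ : ℝ =>
      stdΦ (Δ / (2 * σ) - ε * σ / Δ) - Real.exp ε * stdΦ (-(Δ / (2 * σ)) - ε * σ / Δ))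
      (Set.Ioi 0) := by
  have hderiv (σ : ℝ) (hσ : σ ∈ Ioi 0) := hasDerivAt_gaussianDelta ε hΔ.ne' (ne_of_gt hσ)
  show AntitoneOn (gaussianDelta Δ ε) (Ioi 0)
  refine antitoneOn_of_hasDerivWithinAt_nonpos (convex_Ioi 0)
    (f' := fun σ => -(Δ / σ ^ 2) * stdφ (Δ / (2 * σ) - ε * σ / Δ))
    (fun σ hσ => (hderiv σ hσ).continuousAt.continuousWithinAt) ?_ ?_ <;> rw [interior_Ioi]
  · exact fun σ hσ => (hderiv σ hσ).hasDerivWithinAt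
  · intro σ hσ
    have hslope : 0 < Δ / σ ^ 2 := div_pos hΔ (pow_pos hσ 2)
    exact mul_nonpos_of_nonpos_of_nonneg (neg_nonpos.2 hslope.le) (stdφ_nonneg _)

theorem stmt2 (Δ ε : ℝ) (hΔ : 0 < Δ) (hε : 0 ≤ ε) :
    AntitoneOn (fun σ : ℝ =>
      stdΦ (Δ / (2 * σ) - ε * σ / Δ) - Real.exp ε * stdΦ (-(Δ / (2 * σ)) - ε * σ / Δ))
      (Set.Ioi 0) :=
  stmt2_general Δ ε hΔ
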